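/- arXiv:1312.4682 — 2 statements merged into one kernel-verified Lean document; each statement's English description precedes it below -/
import Mathlib

section
/- Let q ∈ ℂ with q ≠ 0, 1, and let L be a (possibly noncommutative) ring containing ℂ in its center, equipped with a ring endomorphism σ and an additive map θ satisfying the twisted Leibniz rule θ(ab) = θ(a)b + σ(a)θ(b). Suppose Y = (y_{ij}) is a 2×2 matrix with entries in L whose entries pairwise commute, satisfying σ(y_{11}) = q y_{11}, σ(y_{12}) = q y_{12}, σ(y_{21}) = y_{21}, σ(y_{22}) = y_{22}, θ(y_{11}) = y_{21}, θ(y_{12}) = y_{22}, θ(y_{21}) = 0, θ(y_{22}) = 0. Then y_{11} y_{22} − y_{12} y_{21} = 0. -/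
/-- Key lemma: over a ring `L` containing ℂ in its center, with a ring
endomorphism `σ` and an additive map `θ` satisfying the twisted Leibniz rule,
any 2×2 solution matrix with pairwise commuting entries of the linear qsi
system `σY = diag(q,1)Y`, `θY = [[0,1],[0,0]]Y` has vanishing determinant. -/
theorem det_eq_zero_of_qsi_solution (q : ℂ) (hq0 : q ≠ 0) (hq1 : q ≠ 1)
    (L : Type*) [Ring L] [Algebra ℂ L]
    (σ : L →+* L) (θ : L →+ L)
    (hLeib : ∀ a b : L, θ (a * b) = θ a * b + σ a * θ b)
    (y : Fin 2 → Fin 2 → L)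
    (hcomm : ∀ i j k l, y i j * y k l = y k l * y i j)
    (hσ11 : σ (y 0 0) = algebraMap ℂ L q * y 0 0)
    (hσ12 : σ (y 0 1) = algebraMap ℂ L q * y 0 1)
    (hσ21 : σ (y 1 0) = y 1 0)
    (hσ22 : σ (y 1 1) = y 1 1)
    (hθ11 : θ (y 0 0) = y 1 0)
    (hθ12 : θ (y 0 1) = y 1 1)
    (hθ21 : θ (y 1 0) = 0)
    (hθ22 : θ (y 1 1) = 0) :
    y 0 0 * y 1 1 - y 0 1 * y 1 0 = 0 := by
  set a : ℂ →+* L := algebraMap ℂ L with ha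
  have h1 : θ (y 0 0 * y 0 1) = y 1 0 * y 0 1 + a q * (y 0 0 * y 1 1) := by
    rw [hLeib, hθ11, hσ11, hθ12, mul_assoc]
  have h2 : θ (y 0 1 * y 0 0) = y 1 1 * y 0 0 + a q * (y 0 1 * y 1 0) := by
    rw [hLeib, hθ12, hσ12, hθ11, mul_assoc]
  have hc : y 0 0 * y 0 1 = y 0 1 * y 0 0 := hcomm 0 0 0 1
  have key : y 1 0 * y 0 1 + a q * (y 0 0 * y 1 1)
      = y 1 1 * y 0 0 + a q * (y 0 1 * y 1 0) := by
    rw [← h1, ← h2, hc]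
  have key2 : a (q - 1) * (y 0 0 * y 1 1 - y 0 1 * y 1 0) = 0 := by
    have e1 : y 1 0 * y 0 1 = y 0 1 * y 1 0 := hcomm 1 0 0 1
    have e2 : y 1 1 * y 0 0 = y 0 0 * y 1 1 := hcomm 1 1 0 0
    rw [e1, e2] at key
    have : a (q - 1) = a q - 1 := by
      simp [map_sub]
    rw [this, sub_mul, one_mul, mul_sub]
    have h3 : a q * (y 0 0 * y 1 1) - a q * (y 0 1 * y 1 0)
        - (y 0 0 * y 1 1 - y 0 1 * y 1 0)
        = (y 0 1 * y 1 0 + a q * (y 0 0 * y 1 1))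
          - (y 0 0 * y 1 1 + a q * (y 0 1 * y 1 0)) := by abel
    rw [h3, key, sub_self]
  have hu : IsUnit (a (q - 1)) := by
    refine IsUnit.map (algebraMap ℂ L) ?_
    exact (sub_ne_zero.mpr hq1).isUnit
  obtain ⟨u, hu⟩ := hu
  have := congrArg (fun x => (↑u⁻¹ : L) * x) key2
  simpa [← hu, ← mul_assoc] using this
end

section
/- Let q ∈ ℂ, q ≠ 0 and not a root of unity. On the algebra R = ℂ[t, Q, Q^{−1}] with relation Qt = qtQ, define a ℂ-algebra endomorphism σ by σ(t) = qt, σ(Q) = qQ, and a σ-twisted derivation θ (satisfying θ(ab) = θ(a)b + σ(a)θ(b)) by θ(t) = 1, θ(Q) = 0. Then the only two-sided ideals I of R satisfying σ(I) ⊆ I and θ(I) ⊆ I are 0 and R. -/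
/-!
Every element of `R` is a linear combination of monomials `t^m Q^n`. Conjugation by `Q` and `σ`
preserve a stable ideal `I` and act diagonally on monomials, with eigenvalues `q^m` and `q^(m+n)`;
as `q` is not a root of unity these eigenvalues separate the monomials, so applying Lagrange
interpolation polynomials in these two operators shows that each monomial term of an element of `I`
lies in `I`. A nonzero `I` therefore contains some `t^k`, and `θ(t^(k+1)) = [k+1]_q t^k` with
`[k+1]_q = 1 + q + ⋯ + q^k ≠ 0` lowers the exponent until `1 ∈ I`.
-/

/-- Generators of the algebra `R = ℂ⟨t, Q, Q⁻¹⟩`. -/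
inductive Rgen | t | Q | Qinv

open FreeAlgebra in
/-- Defining relations of `R`: `Q·t = q·t·Q` and `Q·Q⁻¹ = Q⁻¹·Q = 1`. -/
inductive Rrel (q : ℂ) : FreeAlgebra ℂ Rgen → FreeAlgebra ℂ Rgen → Prop
  | comm : Rrel q (ι ℂ Rgen.Q * ι ℂ Rgen.t) (q • (ι ℂ Rgen.t * ι ℂ Rgen.Q))
  | inv_right : Rrel q (ι ℂ Rgen.Q * ι ℂ Rgen.Qinv) 1
  | inv_left : Rrel q (ι ℂ Rgen.Qinv * ι ℂ Rgen.Q) 1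

/-- The ℂ-algebra `R = ℂ[t, Q, Q⁻¹]` with relation `Qt = qtQ`. -/
abbrev Ralg (q : ℂ) : Type := RingQuot (Rrel q)

noncomputable def Ralg.t (q : ℂ) : Ralg q :=
  RingQuot.mkAlgHom ℂ (Rrel q) (FreeAlgebra.ι ℂ Rgen.t)
noncomputable def Ralg.Q (q : ℂ) : Ralg q :=
  RingQuot.mkAlgHom ℂ (Rrel q) (FreeAlgebra.ι ℂ Rgen.Q)
noncomputable def Ralg.Qinv (q : ℂ) : Ralg q :=
  RingQuot.mkAlgHom ℂ (Rrel q) (FreeAlgebra.ι ℂ Rgen.Qinv)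

theorem zpow_injective_of_not_isOfFinOrder {G₀ : Type*} [GroupWithZero G₀] {a : G₀}
    (ha₀ : a ≠ 0) (ha : ¬IsOfFinOrder a) : Function.Injective (a ^ · : ℤ → G₀) := by
  rw [← Units.val_mk0 ha₀, Units.isOfFinOrder_val, ← injective_zpow_iff_not_isOfFinOrder] at ha
  intro m n h
  exact ha (Units.ext (by simpa using h))

theorem geom_sum_ne_zero_of_not_isOfFinOrder {R : Type*} [Ring R] {a : R}
    (ha : ¬IsOfFinOrder a) {n : ℕ} (hn : 0 < n) : ∑ i ∈ Finset.range n, a ^ i ≠ 0 := by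
  intro h
  have := geom_sum_mul a n
  rw [h, zero_mul, eq_comm, sub_eq_zero] at this
  exact ha (isOfFinOrder_iff_pow_eq_one.mpr ⟨n, hn, this⟩)

theorem Submodule.sum_filter_eigenvalue_mem {K V ι : Type*} [Field K] [DecidableEq K]
    [AddCommGroup V] [Module K V] {p : Submodule K V} {f : Module.End K V} (hf : p ≤ p.comap f)
    {s : Finset ι} {v : ι → V} {μ : ι → K} (hv : ∀ i ∈ s, f (v i) = μ i • v i)
    (hs : ∑ i ∈ s, v i ∈ p) (c : K) : ∑ i ∈ s with μ i = c, v i ∈ p := by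
  let L := Lagrange.basis (insert c (s.image μ)) id c
  convert Polynomial.aeval_apply_smul_mem_of_le_comap hs L f hf using 1
  rw [map_sum, Finset.sum_filter]
  refine Finset.sum_congr rfl fun i hi => ?_
  rw [Module.End.aeval_apply_of_mem_apply_eq_smul (hv i hi)]
  split_ifs with h
  · rw [h, show L.eval c = 1 from
      Lagrange.eval_basis_self (Set.injOn_id _) (Finset.mem_insert_self _ _), one_smul]
  · rw [show L.eval (μ i) = 0 from Lagrange.eval_basis_of_ne (v := id) (Ne.symm h)
      (Finset.mem_insert_of_mem (Finset.mem_image_of_mem μ hi)), zero_smul]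

theorem apply_pow_succ_of_leibniz {R A : Type*} [CommSemiring R] [Semiring A] [Algebra R A]
    {σ θ : A → A} (hLeib : ∀ a b, θ (a * b) = θ a * b + σ a * θ b) {x : A} {c : R}
    (hσx : σ x = c • x) (hθx : θ x = 1) (k : ℕ) :
    θ (x ^ (k + 1)) = (∑ i ∈ Finset.range (k + 1), c ^ i) • x ^ k := by
  induction k with
  | zero => simp [hθx]
  | succ k ih =>
    rw [pow_succ' x (k + 1), hLeib, hθx, one_mul, ih, hσx, smul_mul_smul_comm, ← pow_succ',
      geom_sum_succ (n := k + 1), add_smul, one_smul, add_comm]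

section FieldAlgebra

variable {K A B : Type*} [Field K] [Ring A] [Ring B] [Algebra K A] [Algebra K B]

theorem SemiconjBy.units_zpow_smul {u : Aˣ} {x : A} {c : K} (hc : c ≠ 0)
    (h : SemiconjBy (u : A) x (c • x)) (n : ℤ) : SemiconjBy ↑(u ^ n) x (c ^ n • x) := by
  have hinv : SemiconjBy ↑u⁻¹ x (c⁻¹ • x) := by
    have := h.units_inv_symm_left.smul_right c⁻¹
    rwa [smul_smul, inv_mul_cancel₀ hc, one_smul] at this
  induction n using Int.induction_on with
  | zero => simp
  | succ n ih =>
    rw [zpow_add_one, zpow_add_one₀ hc, mul_comm, mul_smul]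
    exact (ih.smul_right c).mul_left h
  | pred n ih =>
    rw [zpow_sub_one, zpow_sub_one₀ hc, mul_comm, mul_smul]
    exact (ih.smul_right c⁻¹).mul_left hinv

theorem AlgHom.map_units_zpow_of_map_eq_smul (φ : A →ₐ[K] B) {u : Aˣ} {v : Bˣ} {c : K}
    (hc : c ≠ 0) (h : φ u = c • (v : B)) (n : ℤ) : φ ↑(u ^ n) = c ^ n • ↑(v ^ n) := by
  have hinv : φ ↑u⁻¹ = c⁻¹ • ↑v⁻¹ := by
    rw [eq_inv_smul_iff₀ hc]
    calc c • φ ↑u⁻¹ = ↑v⁻¹ * (c • ↑v * φ ↑u⁻¹) := by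
          rw [smul_mul_assoc, mul_smul_comm, Units.inv_mul_cancel_left]
      _ = ↑v⁻¹ := by rw [← h, ← map_mul, Units.mul_inv, map_one, mul_one]
  induction n using Int.induction_on with
  | zero => simp
  | succ n ih =>
    rw [zpow_add_one, zpow_add_one, Units.val_mul, map_mul, ih, h, smul_mul_smul_comm,
      zpow_add_one₀ hc, Units.val_mul]
  | pred n ih =>
    rw [zpow_sub_one, zpow_sub_one, Units.val_mul, map_mul, ih, hinv, smul_mul_smul_comm,
      zpow_sub_one₀ hc, Units.val_mul]

theorem TwoSidedIdeal.one_mem_of_pow_mem_of_leibniz {I : TwoSidedIdeal A} {σ θ : A → A}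
    (hθI : ∀ y ∈ I, θ y ∈ I) (hLeib : ∀ a b, θ (a * b) = θ a * b + σ a * θ b) {x : A} {c : K}
    (hc : ¬IsOfFinOrder c) (hσx : σ x = c • x) (hθx : θ x = 1) {k : ℕ} (hk : x ^ k ∈ I) :
    (1 : A) ∈ I := by
  have := SMulMemClass.ofIsScalarTower (TwoSidedIdeal A) K A A
  induction k with
  | zero => simpa using hk
  | succ k ih =>
    have hθ := hθI _ hk
    rw [apply_pow_succ_of_leibniz hLeib hσx hθx] at hθ
    refine ih ?_
    simpa [smul_smul, geom_sum_ne_zero_of_not_isOfFinOrder hc k.succ_pos] using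
      SMulMemClass.smul_mem (∑ i ∈ Finset.range (k + 1), c ^ i)⁻¹ hθ

end FieldAlgebra

namespace Ralg

variable (q : ℂ)

theorem Q_mul_Qinv : Q q * Qinv q = 1 := by
  rw [Q, Qinv, ← map_mul, RingQuot.mkAlgHom_rel ℂ Rrel.inv_right, map_one]

theorem Qinv_mul_Q : Qinv q * Q q = 1 := by
  rw [Q, Qinv, ← map_mul, RingQuot.mkAlgHom_rel ℂ Rrel.inv_left, map_one]

theorem semiconjBy_Q_t : SemiconjBy (Q q) (t q) (q • t q) := by
  rw [SemiconjBy, Q, t, ← map_mul, RingQuot.mkAlgHom_rel ℂ Rrel.comm, map_smul, map_mul,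
    smul_mul_assoc]

noncomputable def unitQ : (Ralg q)ˣ := ⟨Q q, Qinv q, Q_mul_Qinv q, Qinv_mul_Q q⟩

noncomputable def monomial (m : ℕ) (n : ℤ) : Ralg q := t q ^ m * ↑(unitQ q ^ n)

theorem adjoin_range_generators :
    Algebra.adjoin ℂ (Set.range fun g => RingQuot.mkAlgHom ℂ (Rrel q) (FreeAlgebra.ι ℂ g)) = ⊤ := by
  rw [Set.range_comp' (RingQuot.mkAlgHom ℂ (Rrel q)), Algebra.adjoin_image,
    FreeAlgebra.adjoin_range_ι, Algebra.map_top, AlgHom.range_eq_top]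
  exact RingQuot.mkAlgHom_surjective ℂ (Rrel q)

variable {q}

theorem semiconjBy_unitQ_zpow_t_pow (hq : q ≠ 0) (a : ℤ) (k : ℕ) :
    SemiconjBy ↑(unitQ q ^ a) (t q ^ k) (q ^ (a * k) • t q ^ k) := by
  have h := (semiconjBy_Q_t q).pow_right k
  rw [smul_pow] at h
  rw [mul_comm, zpow_mul, zpow_natCast]
  exact h.units_zpow_smul (pow_ne_zero k hq) a

theorem monomial_mul (hq : q ≠ 0) (m k : ℕ) (a b : ℤ) :
    monomial q m a * monomial q k b = q ^ (a * k) • monomial q (m + k) (a + b) := by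
  rw [monomial, monomial, monomial, mul_assoc, ← mul_assoc _ (t q ^ k),
    (semiconjBy_unitQ_zpow_t_pow hq a k).eq, zpow_add, Units.val_mul, pow_add]
  simp only [smul_mul_assoc, mul_smul_comm, mul_assoc]

theorem monomial_zero_zero : monomial q 0 0 = 1 := by simp [monomial]

theorem monomial_one_zero : monomial q 1 0 = t q := by simp [monomial]

theorem monomial_zero_one : monomial q 0 1 = Q q := by simp [monomial, unitQ]

theorem monomial_zero_neg_one : monomial q 0 (-1) = Qinv q := by simp [monomial, unitQ]

theorem span_range_monomial_eq_top (hq : q ≠ 0) :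
    Submodule.span ℂ (Set.range fun p : ℕ × ℤ => monomial q p.1 p.2) = ⊤ := by
  set S := Submodule.span ℂ (Set.range fun p : ℕ × ℤ => monomial q p.1 p.2)
  have mem (m : ℕ) (n : ℤ) : monomial q m n ∈ S := Submodule.subset_span ⟨(m, n), rfl⟩
  have mul_le : S * S ≤ S := by
    rw [Submodule.span_mul_span, Submodule.span_le]
    rintro _ ⟨_, ⟨⟨m, a⟩, rfl⟩, _, ⟨⟨k, b⟩, rfl⟩, rfl⟩
    show monomial q m a * monomial q k b ∈ S
    rw [monomial_mul hq]
    exact S.smul_mem _ (mem _ _)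
  let B := S.toSubalgebra (monomial_zero_zero (q := q) ▸ mem 0 0)
    fun _ _ hx hy => mul_le (Submodule.mul_mem_mul hx hy)
  have hB : ⊤ ≤ B := by
    rw [← adjoin_range_generators, Algebra.adjoin_le_iff]
    rintro _ ⟨_ | _ | _, rfl⟩
    · exact (monomial_one_zero (q := q) ▸ mem 1 0 : t q ∈ S)
    · exact (monomial_zero_one (q := q) ▸ mem 0 1 : Q q ∈ S)
    · exact (monomial_zero_neg_one (q := q) ▸ mem 0 (-1) : Qinv q ∈ S)
  exact eq_top_iff.mpr fun x _ => hB Algebra.mem_top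

theorem Q_mul_monomial_mul_Qinv (hq : q ≠ 0) (m : ℕ) (n : ℤ) :
    Q q * (monomial q m n * Qinv q) = q ^ (m : ℤ) • monomial q m n := by
  rw [← monomial_zero_one, ← monomial_zero_neg_one, monomial_mul hq, mul_smul_comm,
    monomial_mul hq]
  simp

theorem monomial_mul_unitQ_zpow_neg (m : ℕ) (n : ℤ) :
    monomial q m n * ↑(unitQ q ^ (-n)) = t q ^ m := by
  rw [monomial, mul_assoc, ← Units.val_mul, ← zpow_add, add_neg_cancel, zpow_zero, Units.val_one,
    mul_one]

theorem t_pow_mem_of_smul_monomial_mem {I : TwoSidedIdeal (Ralg q)} {c : ℂ} (hc : c ≠ 0)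
    {m : ℕ} {n : ℤ} (h : c • monomial q m n ∈ I) : t q ^ m ∈ I := by
  have := SMulMemClass.ofIsScalarTower (TwoSidedIdeal (Ralg q)) ℂ _ _
  have h' := SMulMemClass.smul_mem c⁻¹ (I.mul_mem_right _ ↑(unitQ q ^ (-n)) h)
  rwa [smul_mul_assoc, smul_smul, inv_mul_cancel₀ hc, one_smul, monomial_mul_unitQ_zpow_neg] at h'

theorem map_monomial {σ : Ralg q →ₐ[ℂ] Ralg q} (hq : q ≠ 0) (hσt : σ (t q) = q • t q)
    (hσQ : σ (Q q) = q • Q q) (m : ℕ) (n : ℤ) :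
    σ (monomial q m n) = q ^ ((m : ℤ) + n) • monomial q m n := by
  rw [monomial, map_mul, map_pow, hσt, σ.map_units_zpow_of_map_eq_smul (v := unitQ q) hq hσQ n,
    smul_pow, smul_mul_smul_comm, zpow_add₀ hq, zpow_natCast]

theorem smul_monomial_mem_of_sum_mem (hq₀ : q ≠ 0) (hq : ¬IsOfFinOrder q)
    {σ : Ralg q →ₐ[ℂ] Ralg q} (hσt : σ (t q) = q • t q) (hσQ : σ (Q q) = q • Q q)
    {I : TwoSidedIdeal (Ralg q)} (hσI : ∀ x ∈ I, σ x ∈ I) {s : Finset (ℕ × ℤ)}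
    {c : ℕ × ℤ → ℂ} (hs : ∑ p ∈ s, c p • monomial q p.1 p.2 ∈ I) {p₀ : ℕ × ℤ} (hp₀ : p₀ ∈ s) :
    c p₀ • monomial q p₀.1 p₀.2 ∈ I := by
  classical
  let P := I.asIdeal.restrictScalars ℂ
  have hconj : P ≤ P.comap (LinearMap.mulLeft ℂ (Q q) ∘ₗ LinearMap.mulRight ℂ (Qinv q)) :=
    fun x hx => I.mul_mem_left _ _ (I.mul_mem_right _ _ hx)
  have hσ : P ≤ P.comap σ.toLinearMap := hσI
  have h₁ := Submodule.sum_filter_eigenvalue_mem hconj (μ := fun p => q ^ (p.1 : ℤ))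
    (fun p _ => by simp [Q_mul_monomial_mul_Qinv hq₀, smul_comm (c p)]) hs (q ^ (p₀.1 : ℤ))
  have h₂ := Submodule.sum_filter_eigenvalue_mem hσ (μ := fun p => q ^ ((p.1 : ℤ) + p.2))
    (fun p _ => by simp [map_monomial hq₀ hσt hσQ, smul_comm (c p)]) h₁ (q ^ ((p₀.1 : ℤ) + p₀.2))
  have hinj := zpow_injective_of_not_isOfFinOrder hq₀ hq
  have hsep : ∀ p : ℕ × ℤ, (q ^ (p.1 : ℤ) = q ^ (p₀.1 : ℤ) ∧
      q ^ ((p.1 : ℤ) + p.2) = q ^ ((p₀.1 : ℤ) + p₀.2)) ↔ p = p₀ := by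
    intro p
    rw [hinj.eq_iff, hinj.eq_iff, Prod.ext_iff]
    omega
  rwa [Finset.filter_filter, Finset.filter_congr fun p _ => hsep p, Finset.filter_eq', if_pos hp₀,
    Finset.sum_singleton] at h₂

end Ralg

theorem Ralg_qsi_simple_general (q : ℂ) (hq0 : q ≠ 0)
    (hroot : ∀ n : ℕ, 0 < n → q ^ n ≠ 1)
    (σ : Ralg q →ₐ[ℂ] Ralg q)
    (hσt : σ (Ralg.t q) = q • Ralg.t q)
    (hσQ : σ (Ralg.Q q) = q • Ralg.Q q)
    (θ : Ralg q →ₗ[ℂ] Ralg q)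
    (hLeib : ∀ a b : Ralg q, θ (a * b) = θ a * b + σ a * θ b)
    (hθt : θ (Ralg.t q) = 1)
    (I : TwoSidedIdeal (Ralg q))
    (hσI : ∀ x ∈ I, σ x ∈ I)
    (hθI : ∀ x ∈ I, θ x ∈ I) :
    I = ⊥ ∨ I = ⊤ := by
  have hq : ¬IsOfFinOrder q := fun h =>
    let ⟨n, hn, hqn⟩ := isOfFinOrder_iff_pow_eq_one.mp h; hroot n hn hqn
  refine or_iff_not_imp_left.mpr fun hI => I.one_mem_iff.mp ?_
  obtain ⟨x, hxI, hx0⟩ : ∃ x ∈ I, x ≠ 0 := by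
    by_contra! h
    exact hI (eq_bot_iff.mpr fun x hx => (TwoSidedIdeal.mem_bot _).mpr (h x hx))
  obtain ⟨c, rfl⟩ := Finsupp.mem_span_range_iff_exists_finsupp.mp
    (Ralg.span_range_monomial_eq_top hq0 ▸ Submodule.mem_top : x ∈ _)
  obtain ⟨p₀, hp₀⟩ := (Finsupp.support_nonempty_iff (f := c)).mpr (by rintro rfl; simp at hx0)
  have hmon := Ralg.smul_monomial_mem_of_sum_mem hq0 hq hσt hσQ hσI hxI hp₀
  have ht := Ralg.t_pow_mem_of_smul_monomial_mem (Finsupp.mem_support_iff.mp hp₀) hmon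
  exact I.one_mem_of_pow_mem_of_leibniz hθI hLeib hq hσt hθt ht

/-- Simplicity of the qsi algebra `R = ℂ[t,Q,Q⁻¹]`, `Qt = qtQ`: the only
two-sided ideals stable under `σ` (the algebra endomorphism with `σt = qt`,
`σQ = qQ`) and under the `σ`-twisted derivation `θ` (with `θt = 1`, `θQ = 0`)
are `0` and `R`. -/
theorem Ralg_qsi_simple (q : ℂ) (hq0 : q ≠ 0)
    (hroot : ∀ n : ℕ, 0 < n → q ^ n ≠ 1)
    (σ : Ralg q →ₐ[ℂ] Ralg q)
    (hσt : σ (Ralg.t q) = q • Ralg.t q)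
    (hσQ : σ (Ralg.Q q) = q • Ralg.Q q)
    (θ : Ralg q →ₗ[ℂ] Ralg q)
    (hLeib : ∀ a b : Ralg q, θ (a * b) = θ a * b + σ a * θ b)
    (hθt : θ (Ralg.t q) = 1)
    (hθQ : θ (Ralg.Q q) = 0)
    (I : TwoSidedIdeal (Ralg q))
    (hσI : ∀ x ∈ I, σ x ∈ I)
    (hθI : ∀ x ∈ I, θ x ∈ I) :
    I = ⊥ ∨ I = ⊤ :=
  Ralg_qsi_simple_general q hq0 hroot σ hσt hσQ θ hLeib hθt I hσI hθI
end
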